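/- Let α = (1+√33)/4. Suppose Q : ℕ × Fin 2 → ℝ satisfies Q(t+1,0) ≥ Q(t,1) and Q(t+1,1) ≥ 2·Q(t,0) + (1/2)·Q(t,1) for all t, and Q(0,0), Q(0,1), Q(1,0), Q(1,1) are all at least some c > 0. Then there exists a constant c' > 0 such that Q(t,b) ≥ c'·α^t for all t and b ∈ {0,1}. -/

import Mathlib

/-! The vector `(α^t, α^(t+1))` satisfies the recursion with equality, because `α² = α/2 + 2`;
by induction `Q(t, 0) ≥ k α^t` and `Q(t, 1) ≥ k α^(t+1)` once this holds at `t = 0`, and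
`k = c/α` makes it hold there. -/

open Real

theorem pow_le_of_recursion {u v : ℕ → ℝ} {k r : ℝ} (hk : 0 ≤ k) (hr : 0 ≤ r)
    (hr2 : r ^ 2 ≤ r / 2 + 2)
    (hu : ∀ t, v t ≤ u (t + 1)) (hv : ∀ t, 2 * u t + (1 / 2) * v t ≤ v (t + 1))
    (hu0 : k ≤ u 0) (hv0 : k * r ≤ v 0) :
    ∀ t, k * r ^ t ≤ u t ∧ k * r ^ (t + 1) ≤ v t := by
  intro t
  induction t with
  | zero => simpa using ⟨hu0, hv0⟩
  | succ t ih =>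
    obtain ⟨ihu, ihv⟩ := ih
    refine ⟨ihv.trans (hu t), ?_⟩
    have hkr : 0 ≤ k * r ^ t := by positivity
    calc k * r ^ (t + 1 + 1) = k * r ^ t * r ^ 2 := by ring
      _ ≤ k * r ^ t * (r / 2 + 2) := mul_le_mul_of_nonneg_left hr2 hkr
      _ = 2 * (k * r ^ t) + (1 / 2) * (k * r ^ (t + 1)) := by ring
      _ ≤ 2 * u t + (1 / 2) * v t := by linarith
      _ ≤ v (t + 1) := hv t

theorem one_lt_nandGrowth : 1 < (1 + √33) / 4 := by
  have : (3 : ℝ) < √33 := (lt_sqrt (by norm_num)).2 (by norm_num)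
  linarith

theorem nandGrowth_sq : ((1 + √33) / 4) ^ 2 = (1 + √33) / 4 / 2 + 2 := by
  have : √33 ^ 2 = 33 := sq_sqrt (by norm_num)
  linear_combination this / 16

theorem stmt_1_general (Q : ℕ × Fin 2 → ℝ) (c : ℝ) (hc : 0 < c)
    (hrec0 : ∀ t : ℕ, Q (t, 1) ≤ Q (t + 1, 0))
    (hrec1 : ∀ t : ℕ, 2 * Q (t, 0) + (1/2) * Q (t, 1) ≤ Q (t + 1, 1))
    (h00 : c ≤ Q (0, 0)) (h01 : c ≤ Q (0, 1)) :
    ∃ c' : ℝ, 0 < c' ∧ ∀ (t : ℕ) (b : Fin 2),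
      c' * ((1 + Real.sqrt 33) / 4) ^ t ≤ Q (t, b) := by
  set α : ℝ := (1 + √33) / 4
  have hα : 1 < α := one_lt_nandGrowth
  have hα0 : 0 < α := one_pos.trans hα
  have hc' : 0 < c / α := div_pos hc hα0
  have hbase : c / α ≤ Q (0, 0) := (div_le_self hc.le hα.le).trans h00
  have hbase' : c / α * α ≤ Q (0, 1) := by rwa [div_mul_cancel₀ c hα0.ne']
  have key := pow_le_of_recursion (u := fun t => Q (t, 0)) (v := fun t => Q (t, 1)) hc'.le
    hα0.le nandGrowth_sq.le hrec0 hrec1 hbase hbase'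
  refine ⟨c / α, hc', fun t b => ?_⟩
  fin_cases b
  · exact (key t).1
  · calc c / α * α ^ t ≤ c / α * α ^ (t + 1) := by gcongr; exacts [hα.le, t.le_succ]
      _ ≤ Q (t, 1) := (key t).2

theorem stmt_1 (Q : ℕ × Fin 2 → ℝ) (c : ℝ) (hc : 0 < c)
    (hrec0 : ∀ t : ℕ, Q (t, 1) ≤ Q (t + 1, 0))
    (hrec1 : ∀ t : ℕ, 2 * Q (t, 0) + (1/2) * Q (t, 1) ≤ Q (t + 1, 1))
    (h00 : c ≤ Q (0, 0)) (h01 : c ≤ Q (0, 1))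
    (h10 : c ≤ Q (1, 0)) (h11 : c ≤ Q (1, 1)) :
    ∃ c' : ℝ, 0 < c' ∧ ∀ (t : ℕ) (b : Fin 2),
      c' * ((1 + Real.sqrt 33) / 4) ^ t ≤ Q (t, b) :=
  stmt_1_general Q c hc hrec0 hrec1 h00 h01
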